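/- Let 𝔤 = 𝔤_{4.3} be the 4-dimensional real Lie algebra with basis e₁,...,e₄ and nonzero brackets [e₁,e₄] = e₁ and [e₃,e₄] = e₂. A 4×4 real matrix R equals η·Id + D for some η ∈ ℝ and some derivation D of 𝔤 if and only if R₂₁ = R₃₁ = R₄₁ = 0, R₃₂ = R₄₂ = R₄₃ = 0, R₁₂ = R₁₃ = 0, and R₃₃ = R₂₂. In this case η = R₄₄. -/

import Mathlib

/-!
Evaluating the derivation identity on the brackets of the basis pairs (e₁,e₄), (e₃,e₄), (e₁,e₃),
(e₂,e₄) shows that the derivations of 𝔤 are exactly the matrices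
`!![a,0,0,d; 0,b,c,f; 0,0,b,g; 0,0,0,0]`. Since every derivation has vanishing (4,4) entry,
`R = η • 1 + D` forces `η = R₄₄`, so such a decomposition exists iff `R - R₄₄ • 1` has this shape.
-/

open Matrix

/-- The Lie bracket of the Lie algebra, in coordinates. -/
def br (x y : Fin 4 → ℝ) : Fin 4 → ℝ :=
  ![(x 0 * y 3 - x 3 * y 0), (x 2 * y 3 - x 3 * y 2), (0:ℝ), (0:ℝ)]

/-- `D` (acting via `mulVec`) is a derivation of the bracket. -/
def IsDer (D : Matrix (Fin 4) (Fin 4) ℝ) : Prop :=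
  ∀ x y : Fin 4 → ℝ, D.mulVec (br x y) = br (D.mulVec x) y + br x (D.mulVec y)

theorem isDer_iff (D : Matrix (Fin 4) (Fin 4) ℝ) :
    IsDer D ↔ D 1 0 = 0 ∧ D 2 0 = 0 ∧ D 3 0 = 0 ∧ D 2 1 = 0 ∧ D 3 1 = 0 ∧ D 3 2 = 0 ∧
      D 0 1 = 0 ∧ D 0 2 = 0 ∧ D 2 2 = D 1 1 ∧ D 3 3 = 0 := by
  constructor
  · intro hD
    have h14 := hD ![1, 0, 0, 0] ![0, 0, 0, 1]
    have h34 := hD ![0, 0, 1, 0] ![0, 0, 0, 1]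
    have h13 := hD ![1, 0, 0, 0] ![0, 0, 1, 0]
    have h24 := hD ![0, 1, 0, 0] ![0, 0, 0, 1]
    simp [funext_iff, Fin.forall_fin_succ, mulVec, dotProduct, br, Fin.sum_univ_four]
      at h14 h34 h13 h24
    refine ⟨?_, ?_, ?_, ?_, ?_, ?_, ?_, ?_, ?_, ?_⟩ <;> linarith
  · rintro ⟨h10, h20, h30, h21, h31, h32, h01, h02, h22, h33⟩ x y
    ext i
    fin_cases i <;> simp [mulVec, dotProduct, br, Fin.sum_univ_four, *] <;> ring

theorem isDer_sub_smul_one_iff (R : Matrix (Fin 4) (Fin 4) ℝ) (η : ℝ) :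
    IsDer (R - η • 1) ↔ (R 1 0 = 0 ∧ R 2 0 = 0 ∧ R 3 0 = 0 ∧ R 2 1 = 0 ∧ R 3 1 = 0 ∧
      R 3 2 = 0 ∧ R 0 1 = 0 ∧ R 0 2 = 0 ∧ R 2 2 = R 1 1) ∧ η = R 3 3 := by
  simp [isDer_iff, one_apply, sub_eq_zero, eq_comm (a := η), and_assoc]

theorem stmt_13 (R : Matrix (Fin 4) (Fin 4) ℝ) :
    ((∃ (η : ℝ) (D : Matrix (Fin 4) (Fin 4) ℝ), IsDer D ∧
        R = η • (1 : Matrix (Fin 4) (Fin 4) ℝ) + D) ↔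
      (R 1 0 = 0 ∧ R 2 0 = 0 ∧ R 3 0 = 0 ∧ R 2 1 = 0 ∧ R 3 1 = 0 ∧ R 3 2 = 0 ∧ R 0 1 = 0 ∧ R 0 2 = 0 ∧ R 2 2 = R 1 1)) ∧
    (∀ (η : ℝ) (D : Matrix (Fin 4) (Fin 4) ℝ), IsDer D →
      R = η • (1 : Matrix (Fin 4) (Fin 4) ℝ) + D → η = R 3 3) := by
  have eq_smul_one_add_iff (η : ℝ) (D : Matrix (Fin 4) (Fin 4) ℝ) :
      R = η • 1 + D ↔ D = R - η • 1 := by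
    rw [eq_sub_iff_add_eq', eq_comm]
  constructor
  · simp only [eq_smul_one_add_iff, exists_eq_right, isDer_sub_smul_one_iff]
  · rintro η D hD hR
    rw [eq_smul_one_add_iff] at hR
    subst hR
    exact ((isDer_sub_smul_one_iff R η).1 hD).2
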